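/- arXiv:2308.06216 — 4 statements merged into one kernel-verified Lean document; each statement's English description precedes it below -/
import Mathlib

section
/- For the harmonic ensemble on the d-dimensional flat torus with parameter T (a determinantal point process with N = (2T+1)^d points), for every nonzero k ∈ ℤ^d, the expected squared modulus of the exponential sum satisfies E|∑_{n=1}^N e^{2πi⟨k,X_n⟩}|² = N − ∏_{j=1}^d max{2T+1−|k_j|, 0}. -/
open MeasureTheory Real

/-- The character `x ↦ e^{2πi⟨k,x⟩}` on the torus `𝕋^d = ℝ^d/ℤ^d`. -/
noncomputable def ep (d : ℕ) (k : Fin d → ℤ) (x : Fin d → ℝ) : ℂ :=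
  Complex.exp (2 * π * Complex.I * ∑ j, (k j : ℂ) * (x j : ℂ))

/-- A fundamental domain `[0,1)^d` for the torus `𝕋^d`. -/
def cube (d : ℕ) : Set (Fin d → ℝ) := Set.univ.pi fun _ => Set.Ico 0 1

/-! With `B = {-T,…,T}^d`, `|K(x,y)|² = ∑_{a,b ∈ B} e_{a-b}(x-y)`, so the integrand is a
trigonometric polynomial in `x - y`. By orthogonality of characters on `[0,1)^d` the `N²` term
integrates to `0` (as `k ≠ 0`) and of the remaining terms only those with `b = a + k` survive.
The double integral is therefore `-#{a ∈ B | a + k ∈ B}`, and this count factorises over the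
coordinates as `∏_j max(2T+1-|k_j|, 0)`. -/

section Characters

variable {d : ℕ}

lemma ep_add (a b : Fin d → ℤ) (x : Fin d → ℝ) : ep d (a + b) x = ep d a x * ep d b x := by
  simp only [ep, ← Complex.exp_add, Pi.add_apply]
  push_cast [add_mul, Finset.sum_add_distrib]
  ring_nf

@[simp]
lemma ep_zero (x : Fin d → ℝ) : ep d 0 x = 1 := by
  simp [ep]

lemma ep_sub (m : Fin d → ℤ) (x y : Fin d → ℝ) : ep d m (x - y) = ep d m x * ep d (-m) y := by
  simp only [ep, ← Complex.exp_add, ← mul_add, ← Finset.sum_add_distrib, Pi.sub_apply,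
    Pi.neg_apply]
  push_cast
  ring_nf

lemma conj_ep (m : Fin d → ℤ) (x : Fin d → ℝ) : starRingEnd ℂ (ep d m x) = ep d (-m) x := by
  simp only [ep, ← Complex.exp_conj, map_mul, map_sum, Complex.conj_I, Complex.conj_ofReal,
    map_ofNat, map_intCast, Pi.neg_apply, Int.cast_neg, Finset.mul_sum]
  ring_nf

lemma ep_eq_prod (m : Fin d → ℤ) (x : Fin d → ℝ) :
    ep d m x = ∏ j, Complex.exp (2 * π * Complex.I * m j * x j) := by
  simp only [ep, ← Complex.exp_sum, Finset.mul_sum, mul_assoc]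

lemma continuous_ep (m : Fin d → ℤ) : Continuous (ep d m) := by
  unfold ep
  fun_prop

lemma integrableOn_cube_ep (m : Fin d → ℤ) : IntegrableOn (ep d m) (cube d) :=
  ((continuous_ep m).continuousOn.integrableOn_compact
    (isCompact_univ_pi fun _ => isCompact_Icc)).mono_set
    (Set.pi_mono fun _ _ => Set.Ico_subset_Icc_self)

end Characters

section Orthogonality

lemma setIntegral_Ico_exp_int_mul (m : ℤ) :
    ∫ t in Set.Ico (0 : ℝ) 1, Complex.exp (2 * π * Complex.I * m * t) = if m = 0 then 1 else 0 := by
  rw [Measure.restrict_congr_set Ico_ae_eq_Ioc, ← intervalIntegral.integral_of_le zero_le_one]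
  split_ifs with hm
  · simp [hm]
  · have hc : (2 * π * Complex.I * m : ℂ) ≠ 0 := by simp [Real.pi_ne_zero, hm]
    rw [integral_exp_mul_complex hc]
    have h1 : (2 * π * Complex.I * m : ℂ) = m * (2 * π * Complex.I) := by ring
    simp [h1, Complex.exp_int_mul_two_pi_mul_I]

variable {d : ℕ}

lemma setIntegral_cube_ep (m : Fin d → ℤ) :
    ∫ x in cube d, ep d m x = if m = 0 then 1 else 0 := by
  simp only [cube, volume_pi, Measure.restrict_pi_pi, ep_eq_prod]
  rw [integral_fintype_prod_eq_prod (fun j (t : ℝ) => Complex.exp (2 * π * Complex.I * m j * t))]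
  simp [setIntegral_Ico_exp_int_mul, Finset.prod_boole, funext_iff]

lemma setIntegral_cube_ep_sub (m : Fin d → ℤ) (x : Fin d → ℝ) :
    ∫ y in cube d, ep d m (x - y) = if m = 0 then 1 else 0 := by
  simp only [ep_sub, integral_const_mul, setIntegral_cube_ep, neg_eq_zero]
  split_ifs with hm <;> simp [hm]

lemma measurableSet_cube (d : ℕ) : MeasurableSet (cube d) :=
  MeasurableSet.univ_pi fun _ => measurableSet_Ico

lemma volume_cube (d : ℕ) : volume (cube d) = 1 := by
  simp [cube, volume_pi, Measure.pi_pi]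

end Orthogonality

section Kernel

variable {d : ℕ}

lemma normSq_sum_ep (B : Finset (Fin d → ℤ)) (z : Fin d → ℝ) :
    (‖∑ a ∈ B, ep d a z‖ : ℂ) ^ 2 = ∑ a ∈ B, ∑ b ∈ B, ep d (a - b) z := by
  rw [← Complex.mul_conj', map_sum, Finset.sum_mul_sum]
  simp only [conj_ep, ← ep_add, sub_eq_add_neg]

lemma integrableOn_cube_ep_sub (m : Fin d → ℤ) (x : Fin d → ℝ) :
    IntegrableOn (fun y => ep d m (x - y)) (cube d) := by
  simp only [ep_sub]
  exact (integrableOn_cube_ep (-m)).const_mul (ep d m x)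

lemma sub_normSq_sum_ep_mul_ep_mul_conj (B : Finset (Fin d → ℤ)) (c : ℂ) (k : Fin d → ℤ)
    (x y : Fin d → ℝ) :
    (c - (‖∑ a ∈ B, ep d a (x - y)‖ : ℂ) ^ 2) * ep d k x * starRingEnd ℂ (ep d k y) =
      c * ep d k (x - y) - ∑ a ∈ B, ∑ b ∈ B, ep d (a - b + k) (x - y) := by
  rw [normSq_sum_ep, conj_ep, mul_assoc, ← ep_sub, sub_mul, Finset.sum_mul]
  simp only [Finset.sum_mul, ← ep_add]

lemma setIntegral_cube_sub_normSq_sum_ep_mul (B : Finset (Fin d → ℤ)) (c : ℂ)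
    {k : Fin d → ℤ} (hk : k ≠ 0) (x : Fin d → ℝ) :
    ∫ y in cube d, (c - (‖∑ a ∈ B, ep d a (x - y)‖ : ℂ) ^ 2) * ep d k x *
        starRingEnd ℂ (ep d k y) = -((B.filter fun a => a + k ∈ B).card : ℂ) := by
  have hint (m : Fin d → ℤ) : IntegrableOn (fun y => ep d m (x - y)) (cube d) :=
    integrableOn_cube_ep_sub m x
  have hsum : ∫ y in cube d, ∑ a ∈ B, ∑ b ∈ B, ep d (a - b + k) (x - y) =
      ((B.filter fun a => a + k ∈ B).card : ℂ) := by
    have hterm (a b : Fin d → ℤ) : a - b + k = 0 ↔ a + k = b := by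
      rw [sub_add_eq_add_sub, sub_eq_zero]
    simp only [integral_finsetSum _ fun _ _ => integrable_finsetSum _ fun _ _ => hint _,
      integral_finsetSum _ fun _ _ => hint _, setIntegral_cube_ep_sub, hterm, Finset.sum_ite_eq,
      Finset.sum_boole]
  simp only [sub_normSq_sum_ep_mul_ep_mul_conj]
  rw [integral_sub ((hint k).const_mul c)
      (integrable_finsetSum _ fun _ _ => integrable_finsetSum _ fun _ _ => hint _),
    integral_const_mul, setIntegral_cube_ep_sub, if_neg hk, hsum, mul_zero, zero_sub]

end Kernel

section Counting

lemma card_filter_add_mem_Icc (T m : ℤ) :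
    ((Finset.Icc (-T) T).filter fun t => t + m ∈ Finset.Icc (-T) T).card =
      (2 * T + 1 - |m|).toNat := by
  have h : ((Finset.Icc (-T) T).filter fun t => t + m ∈ Finset.Icc (-T) T) =
      Finset.Icc (max (-T) (-T - m)) (min T (T - m)) := by
    ext t
    simp only [Finset.mem_filter, Finset.mem_Icc, max_le_iff, le_min_iff]
    omega
  rw [h, Int.card_Icc]
  rcases abs_cases m with ⟨hm, hm'⟩ | ⟨hm, hm'⟩ <;> omega

lemma filter_add_mem_piFinset {ι G : Type*} [Fintype ι] [DecidableEq ι] [Add G] [DecidableEq G]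
    (s : Finset G) (k : ι → G) :
    ((Fintype.piFinset fun _ : ι => s).filter fun a => a + k ∈ Fintype.piFinset fun _ : ι => s) =
      Fintype.piFinset fun j => s.filter fun t => t + k j ∈ s := by
  ext a
  simp only [Finset.mem_filter, Fintype.mem_piFinset, Pi.add_apply, forall_and]

lemma card_filter_add_mem_piFinset_Icc {ι : Type*} [Fintype ι] [DecidableEq ι] (T : ℕ)
    (k : ι → ℤ) :
    (((Fintype.piFinset fun _ : ι => Finset.Icc (-(T : ℤ)) T).filter
        fun a => a + k ∈ Fintype.piFinset fun _ : ι => Finset.Icc (-(T : ℤ)) T).card : ℝ) =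
      ∏ j, max (2 * (T : ℝ) + 1 - |(k j : ℝ)|) 0 := by
  rw [filter_add_mem_piFinset, Fintype.card_piFinset, Nat.cast_prod]
  refine Finset.prod_congr rfl fun j _ => ?_
  rw [card_filter_add_mem_Icc, ← Int.cast_natCast, Int.toNat_eq_max]
  push_cast
  ring_nf

end Counting

theorem stmt_4_general (d T : ℕ) (N : ℕ)
    {Ω : Type} [MeasureSpace Ω]
    (X : Fin N → Ω → (Fin d → ℝ))
    (K : (Fin d → ℝ) → (Fin d → ℝ) → ℂ)
    (hK : ∀ x y, K x y =
      ∑ k ∈ Fintype.piFinset (fun _ : Fin d => Finset.Icc (-(T:ℤ)) T),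
        ep d k (fun j => x j - y j))
    (hvar : ∀ k : Fin d → ℤ, k ≠ 0 →
      ((∫ ω, ‖∑ n, ep d k (X n ω)‖ ^ 2 : ℝ) : ℂ) =
        (N : ℂ) + ∫ x in cube d, ∫ y in cube d,
          ((N : ℂ) ^ 2 - (‖K x y‖ : ℂ) ^ 2) * ep d k x *
            (starRingEnd ℂ) (ep d k y))
    (k : Fin d → ℤ) (hk : k ≠ 0) :
    (∫ ω, ‖∑ n, ep d k (X n ω)‖ ^ 2 : ℝ) =
      (N : ℝ) - ∏ j, max (2 * (T : ℝ) + 1 - |(k j : ℝ)|) 0 := by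
  set B := Fintype.piFinset fun _ : Fin d => Finset.Icc (-(T : ℤ)) T
  have hinner (x : Fin d → ℝ) : ∫ y in cube d, ((N : ℂ) ^ 2 - (‖K x y‖ : ℂ) ^ 2) * ep d k x *
      starRingEnd ℂ (ep d k y) = -((B.filter fun a => a + k ∈ B).card : ℂ) := by
    simp only [hK]
    exact setIntegral_cube_sub_normSq_sum_ep_mul B _ hk x
  have hvark := hvar k hk
  rw [setIntegral_congr_fun (measurableSet_cube d) fun x _ => hinner x, setIntegral_const,
    measureReal_def, volume_cube, ENNReal.toReal_one, one_smul] at hvark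
  apply Complex.ofReal_injective
  rw [hvark, ← card_filter_add_mem_piFinset_Icc T k]
  push_cast
  ring

/-- For the harmonic ensemble on `𝕋^d` with parameter `T` (the determinantal
point process with `N = (2T+1)^d` points and projection kernel
`K(x,y) = ∑_{‖k‖_∞ ≤ T} e^{2πi⟨k,x−y⟩}`, so that the variance identity
`E|∑_n f(X_n)|² = N + ∬(N² − |K|²) f(x) conj (f y)` holds for characters),
for every nonzero `k ∈ ℤ^d`,
`E|∑_{n=1}^N e^{2πi⟨k,X_n⟩}|² = N − ∏_j max{2T+1−|k_j|, 0}`. -/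
theorem stmt_4 (d T : ℕ) (hd : 1 ≤ d) (N : ℕ) (hN : N = (2 * T + 1) ^ d)
    {Ω : Type} [MeasureSpace Ω] [IsProbabilityMeasure (volume : Measure Ω)]
    (X : Fin N → Ω → (Fin d → ℝ))
    (K : (Fin d → ℝ) → (Fin d → ℝ) → ℂ)
    (hK : ∀ x y, K x y =
      ∑ k ∈ Fintype.piFinset (fun _ : Fin d => Finset.Icc (-(T:ℤ)) T),
        ep d k (fun j => x j - y j))
    (hvar : ∀ k : Fin d → ℤ, k ≠ 0 →
      ((∫ ω, ‖∑ n, ep d k (X n ω)‖ ^ 2 : ℝ) : ℂ) =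
        (N : ℂ) + ∫ x in cube d, ∫ y in cube d,
          ((N : ℂ) ^ 2 - (‖K x y‖ : ℂ) ^ 2) * ep d k x *
            (starRingEnd ℂ) (ep d k y))
    (k : Fin d → ℤ) (hk : k ≠ 0) :
    (∫ ω, ‖∑ n, ep d k (X n ω)‖ ^ 2 : ℝ) =
      (N : ℝ) - ∏ j, max (2 * (T : ℝ) + 1 - |(k j : ℝ)|) 0 :=
  stmt_4_general d T N X K hK hvar k hk
end

section
/- For all integers n ≥ 0, the central binomial coefficient satisfies 4^n/√(π(n+1/2)) ≤ C(2n,n) ≤ 4^n/√(π(n+1/4)). -/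
open Real Filter Topology
open scoped Nat

noncomputable def qseq (n : ℕ) : ℝ := (Nat.centralBinom n : ℝ) / 4 ^ n

lemma qseq_pos (n : ℕ) : 0 < qseq n := by
  unfold qseq
  have := Nat.centralBinom_pos n
  have : (0:ℝ) < (Nat.centralBinom n : ℝ) := by exact_mod_cast this
  positivity

lemma qseq_cast (n : ℕ) : (Nat.centralBinom n : ℝ) = (2 * n)! / ((n)! * (n)!) := by
  rw [Nat.centralBinom, Nat.cast_choose ℝ (by omega : n ≤ 2 * n),
    show 2 * n - n = n by omega]

lemma qseq_sq_mul (n : ℕ) : qseq n ^ 2 * (2 * n + 1) = (Real.Wallis.W n)⁻¹ := by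
  have hW := Real.Wallis.W_eq_factorial_ratio n
  have h1 : (0:ℝ) < ((n)! : ℝ) := by exact_mod_cast Nat.factorial_pos n
  have h2 : (0:ℝ) < (((2*n))! : ℝ) := by exact_mod_cast Nat.factorial_pos (2*n)
  have h3 : (0:ℝ) < 2 * (n:ℝ) + 1 := by positivity
  rw [hW]
  unfold qseq
  rw [qseq_cast]
  have h4 : ((2:ℝ)) ^ (4 * n) = (4:ℝ) ^ n * 4 ^ n := by
    rw [show 4 * n = 2 * n + 2 * n by ring, pow_add,
      show (4:ℝ) ^ n = 2 ^ (2 * n) by rw [pow_mul]; norm_num]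
  field_simp
  rw [h4]
  ring

lemma qseq_succ (n : ℕ) : qseq (n + 1) = qseq n * ((2 * n + 1) / (2 * n + 2)) := by
  unfold qseq
  have h := Nat.succ_mul_centralBinom_succ n
  have hc : ((n:ℝ) + 1) * (Nat.centralBinom (n+1) : ℝ) = 2 * (2 * n + 1) * Nat.centralBinom n := by
    exact_mod_cast congrArg (Nat.cast : ℕ → ℝ) h
  have hn1 : ((n:ℝ) + 1) ≠ 0 := by positivity
  have : (Nat.centralBinom (n+1) : ℝ) = 2 * (2 * n + 1) * Nat.centralBinom n / (n + 1) := by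
    field_simp at hc ⊢; linarith [hc]
  rw [this, pow_succ]
  field_simp
  ring

lemma bseq_mono : Monotone (fun n : ℕ => qseq n ^ 2 * (n + 1/4)) := by
  apply monotone_nat_of_le_succ
  intro n
  show qseq n ^ 2 * ((n:ℝ) + 1/4) ≤ qseq (n+1) ^ 2 * (((n+1:ℕ):ℝ) + 1/4)
  rw [qseq_succ]
  have hq := qseq_pos n
  have h1 : (0:ℝ) < 2 * (n:ℝ) + 2 := by positivity
  have key : (qseq n * ((2*(n:ℝ)+1)/(2*n+2)))^2 * ((n+1:ℕ)+1/4)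
      = qseq n^2 * ((2*(n:ℝ)+1)^2 * ((n:ℝ)+1+1/4)) / (2*(n:ℝ)+2)^2 := by
    push_cast
    field_simp
  rw [key, le_div_iff₀ (by positivity)]
  nlinarith [sq_nonneg (qseq n), sq_nonneg ((n:ℝ))]

lemma bseq_tendsto : Tendsto (fun n : ℕ => qseq n ^ 2 * (n + 1/4)) atTop (𝓝 (1/π)) := by
  have hW := Real.Wallis.tendsto_W_nhds_pi_div_two
  have hπ : (0:ℝ) < π := Real.pi_pos
  have h1 : Tendsto (fun n : ℕ => (Real.Wallis.W n)⁻¹) atTop (𝓝 (π/2)⁻¹) :=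
    hW.inv₀ (by positivity)
  have h2 : Tendsto (fun n : ℕ => ((n:ℝ) + 1/4) / (2 * n + 1)) atTop (𝓝 (1/2)) := by
    have hcast := tendsto_natCast_atTop_atTop (R := ℝ)
    have h3 : Tendsto (fun n : ℕ => (1 + (1/4) / (n:ℝ)) / (2 + 1 / n)) atTop
        (𝓝 ((1 + 0) / (2 + 0))) := by
      apply Tendsto.div
      · exact tendsto_const_nhds.add (tendsto_const_nhds.div_atTop hcast)
      · exact tendsto_const_nhds.add (tendsto_const_nhds.div_atTop hcast)
      · norm_num
    have h4 : ((1:ℝ) + 0) / (2 + 0) = 1/2 := by norm_num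
    rw [h4] at h3
    refine h3.congr' ?_
    filter_upwards [eventually_gt_atTop 0] with n hn
    have hn' : (0:ℝ) < n := by exact_mod_cast hn
    field_simp
  have key : Tendsto (fun n : ℕ => (Real.Wallis.W n)⁻¹ * (((n:ℝ) + 1/4) / (2 * n + 1)))
      atTop (𝓝 ((π/2)⁻¹ * (1/2))) := h1.mul h2
  have heq : (π/2)⁻¹ * (1/2) = 1/π := by
    field_simp
  rw [heq] at key
  refine key.congr fun n => ?_
  rw [← qseq_sq_mul]
  have h3 : (0:ℝ) < 2 * (n:ℝ) + 1 := by positivity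
  field_simp

lemma bseq_le (n : ℕ) : qseq n ^ 2 * (n + 1/4) ≤ 1/π :=
  bseq_mono.ge_of_tendsto bseq_tendsto n

/-- For all `n ≥ 0`, `4^n/√(π(n+1/2)) ≤ C(2n,n) ≤ 4^n/√(π(n+1/4))`. -/
theorem stmt_8 (n : ℕ) :
    (4:ℝ)^n / Real.sqrt (π*(n+1/2)) ≤ (Nat.choose (2*n) n : ℝ) ∧
    (Nat.choose (2*n) n : ℝ) ≤ (4:ℝ)^n / Real.sqrt (π*(n+1/4)) := by
  have hπ := Real.pi_pos
  have hq := qseq_pos n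
  have hcast : (Nat.choose (2*n) n : ℝ) = qseq n * 4 ^ n := by
    unfold qseq
    rw [Nat.centralBinom]
    field_simp
  have h4 : (0:ℝ) < 4 ^ n := by positivity
  constructor
  · -- lower bound
    have hWle := Real.Wallis.W_le n
    have hWpos := Real.Wallis.W_pos n
    have h1 : (2:ℝ) ≤ qseq n ^ 2 * (2 * n + 1) * π := by
      rw [qseq_sq_mul]
      rw [inv_mul_eq_div, le_div_iff₀ hWpos]
      linarith
    have h2 : 1 ≤ qseq n ^ 2 * (π * (n + 1/2)) := by nlinarith
    have hs : (0:ℝ) < Real.sqrt (π * (n + 1/2)) := Real.sqrt_pos.mpr (by positivity)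
    rw [hcast, div_le_iff₀ hs]
    have h3 : 1 / qseq n ≤ Real.sqrt (π * (n + 1/2)) := by
      rw [Real.le_sqrt (by positivity) (by positivity), div_pow, one_pow,
        div_le_iff₀ (by positivity)]
      nlinarith
    calc (4:ℝ)^n = (1 / qseq n) * (qseq n * 4^n) := by field_simp
    _ ≤ Real.sqrt (π * (n + 1/2)) * (qseq n * 4 ^ n) :=
        mul_le_mul_of_nonneg_right h3 (by positivity)
    _ = qseq n * 4 ^ n * Real.sqrt (π * (n + 1/2)) := by ring
  · -- upper bound
    have h1 := bseq_le n
    have h2 : qseq n ^ 2 * (π * (n + 1/4)) ≤ 1 := by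
      have hh : π * (qseq n ^ 2 * (n + 1/4)) ≤ π * (1/π) :=
        mul_le_mul_of_nonneg_left h1 hπ.le
      rw [mul_one_div, div_self hπ.ne'] at hh
      nlinarith
    have hs : (0:ℝ) < Real.sqrt (π * (n + 1/4)) := Real.sqrt_pos.mpr (by positivity)
    rw [hcast, le_div_iff₀ hs]
    have h3 : qseq n * Real.sqrt (π * (n + 1/4)) ≤ 1 := by
      rw [← pow_le_one_iff_of_nonneg (by positivity) (two_ne_zero)]
      rw [mul_pow, Real.sq_sqrt (by positivity)]
      nlinarith
    calc qseq n * 4 ^ n * Real.sqrt (π * (n + 1/4))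
        = (qseq n * Real.sqrt (π * (n + 1/4))) * 4^n := by ring
    _ ≤ 1 * 4^n := mul_le_mul_of_nonneg_right h3 h4.le
    _ = 4^n := by ring
end

section
/- Let ℓ, N be positive integers with ℓ(ℓ+1) ≤ 2N+6. Then the sequence a_k = C(ℓ,k)·C(ℓ+k,k)/C(N+k,k), for 1 ≤ k ≤ ℓ, is nonincreasing in k; consequently the alternating sum ∑_{k=1}^ℓ (−1)^{k+1} a_k satisfies 0 ≤ ∑_{k=1}^ℓ (−1)^{k+1} a_k ≤ a_1 = ℓ(ℓ+1)/(N+1). -/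
/-!
The ratio of consecutive terms is `a_{k+1} / a_k = (ℓ-k)(ℓ+k+1) / ((k+1)(N+k+1))`, which is
at most `1` for `k ≥ 1` because `(ℓ-k)(ℓ+k+1) = ℓ(ℓ+1) - k(k+1)`. Since `a_k = 0` for `k > ℓ`,
the shifted sequence `k ↦ a_{k+1}` is antitone on all of `ℕ` and eventually zero, so the
finite alternating sum is the sum of an alternating series and lies between its first two
partial sums, `0` and `a_1`.
-/

open Finset Filter Topology

section AlternatingSum

variable {E : Type*} [Ring E] [PartialOrder E] [IsOrderedRing E] [TopologicalSpace E]
  [OrderClosedTopology E] {f : ℕ → E}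

theorem Antitone.sum_range_alternating_mem_Icc (hf : Antitone f) {n : ℕ}
    (hfn : ∀ i, n ≤ i → f i = 0) :
    ∑ i ∈ range n, (-1) ^ i * f i ∈ Set.Icc 0 (f 0) := by
  have hlim : Tendsto (fun m ↦ ∑ i ∈ range m, (-1) ^ i * f i) atTop
      (𝓝 (∑ i ∈ range n, (-1) ^ i * f i)) := by
    refine tendsto_atTop_of_eventually_const (i₀ := n) fun m hm ↦ ?_
    rw [← sum_range_add_sum_Ico _ hm, add_eq_left]
    refine sum_eq_zero fun i hi ↦ ?_
    rw [hfn i (mem_Ico.1 hi).1, mul_zero]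
  constructor
  · simpa using hf.alternating_series_le_tendsto hlim 0
  · simpa using hf.tendsto_le_alternating_series hlim 0

end AlternatingSum

noncomputable def chooseRatio (l N k : ℕ) : ℝ :=
  (Nat.choose l k * Nat.choose (l + k) k : ℝ) / Nat.choose (N + k) k

theorem chooseRatio_succ (l N k : ℕ) :
    chooseRatio l N (k + 1) =
      chooseRatio l N k * ((l - k : ℕ) * (l + k + 1)) / ((k + 1) * (N + k + 1)) := by
  have hk : (k + 1 : ℝ) ≠ 0 := by positivity
  have hl : (Nat.choose l (k + 1) : ℝ) = Nat.choose l k * (l - k : ℕ) / (k + 1) := by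
    rw [eq_div_iff hk]
    exact_mod_cast Nat.choose_succ_right_eq l k
  have hlk : (Nat.choose (l + (k + 1)) (k + 1) : ℝ) =
      Nat.choose (l + k) k * (l + k + 1) / (k + 1) := by
    rw [eq_div_iff hk]
    exact_mod_cast (Nat.add_one_mul_choose_eq (l + k) k).symm.trans (by ring)
  have hNk : (Nat.choose (N + (k + 1)) (k + 1) : ℝ) =
      Nat.choose (N + k) k * (N + k + 1) / (k + 1) := by
    rw [eq_div_iff hk]
    exact_mod_cast (Nat.add_one_mul_choose_eq (N + k) k).symm.trans (by ring)
  rw [chooseRatio, chooseRatio, hl, hlk, hNk]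
  field_simp

theorem chooseRatio_nonneg (l N k : ℕ) : 0 ≤ chooseRatio l N k := by
  unfold chooseRatio
  positivity

theorem chooseRatio_eq_zero_of_lt {l N k : ℕ} (hlk : l < k) : chooseRatio l N k = 0 := by
  simp [chooseRatio, Nat.choose_eq_zero_of_lt hlk]

theorem chooseRatio_one (l N : ℕ) : chooseRatio l N 1 = l * (l + 1) / (N + 1) := by
  simp only [chooseRatio, Nat.choose_one_right]
  push_cast
  ring

theorem sub_mul_le_succ_mul_of_mul_succ_le {l N k : ℕ} (h : l * (l + 1) ≤ 2 * N + 6)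
    (hk : 1 ≤ k) :
    (l - k) * (l + k + 1) ≤ (k + 1) * (N + k + 1) := by
  rcases le_or_gt l k with hkl | hkl
  · simp [Nat.sub_eq_zero_of_le hkl]
  · obtain ⟨m, rfl⟩ := Nat.exists_eq_add_of_lt hkl
    rw [show k + m + 1 - k = m + 1 by omega]
    nlinarith

theorem chooseRatio_succ_le {l N k : ℕ} (h : l * (l + 1) ≤ 2 * N + 6) (hk : 1 ≤ k) :
    chooseRatio l N (k + 1) ≤ chooseRatio l N k := by
  have hkey : ((l - k : ℕ) : ℝ) * (l + k + 1) ≤ (k + 1) * (N + k + 1) := by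
    exact_mod_cast sub_mul_le_succ_mul_of_mul_succ_le h hk
  rw [chooseRatio_succ, mul_div_assoc]
  exact mul_le_of_le_one_right (chooseRatio_nonneg l N k) ((div_le_one (by positivity)).2 hkey)

theorem stmt_11_general (l N : ℕ) (h : l*(l+1) ≤ 2*N+6) :
    (∀ k, 1 ≤ k → k + 1 ≤ l →
      (Nat.choose l (k+1) * Nat.choose (l+(k+1)) (k+1) : ℝ) /
          (Nat.choose (N+(k+1)) (k+1)) ≤
        (Nat.choose l k * Nat.choose (l+k) k : ℝ) / (Nat.choose (N+k) k)) ∧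
    0 ≤ ∑ k ∈ Finset.Icc 1 l,
        (-1:ℝ)^(k+1) * (Nat.choose l k * Nat.choose (l+k) k : ℝ) /
          (Nat.choose (N+k) k) ∧
    ∑ k ∈ Finset.Icc 1 l,
        (-1:ℝ)^(k+1) * (Nat.choose l k * Nat.choose (l+k) k : ℝ) /
          (Nat.choose (N+k) k) ≤ (l:ℝ)*(l+1)/(N+1) := by
  have hsum : ∑ k ∈ Icc 1 l, (-1 : ℝ) ^ (k + 1) * (Nat.choose l k * Nat.choose (l + k) k : ℝ) /
      Nat.choose (N + k) k = ∑ i ∈ range l, (-1) ^ i * chooseRatio l N (i + 1) :=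
    calc _ = ∑ k ∈ Icc 1 l, (-1 : ℝ) ^ (k + 1) * chooseRatio l N k :=
          sum_congr rfl fun k _ ↦ by rw [chooseRatio, mul_div_assoc]
      _ = ∑ i ∈ range l, (-1 : ℝ) ^ (i + 1 + 1) * chooseRatio l N (i + 1) := by
          rw [range_eq_Ico, sum_Ico_add' (fun k ↦ (-1 : ℝ) ^ (k + 1) * chooseRatio l N k),
            zero_add, Ico_add_one_right_eq_Icc]
      _ = _ := sum_congr rfl fun i _ ↦ by ring
  have hanti : Antitone fun i ↦ chooseRatio l N (i + 1) :=
    antitone_nat_of_succ_le fun i ↦ chooseRatio_succ_le h (Nat.le_add_left 1 i)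
  obtain ⟨hlow, hhigh⟩ := hanti.sum_range_alternating_mem_Icc (n := l)
    fun i hi ↦ chooseRatio_eq_zero_of_lt (Nat.lt_succ_of_le hi)
  rw [hsum, ← chooseRatio_one]
  exact ⟨fun k hk _ ↦ chooseRatio_succ_le h hk, hlow, hhigh⟩

/-- For positive integers `ℓ, N` with `ℓ(ℓ+1) ≤ 2N+6`, the sequence
`a_k = C(ℓ,k)C(ℓ+k,k)/C(N+k,k)` is nonincreasing for `1 ≤ k ≤ ℓ`, and the
alternating sum `∑_{k=1}^ℓ (−1)^{k+1} a_k` lies in `[0, ℓ(ℓ+1)/(N+1)]`. -/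
theorem stmt_11 (l N : ℕ) (hl : 1 ≤ l) (hN : 1 ≤ N) (h : l*(l+1) ≤ 2*N+6) :
    (∀ k, 1 ≤ k → k + 1 ≤ l →
      (Nat.choose l (k+1) * Nat.choose (l+(k+1)) (k+1) : ℝ) /
          (Nat.choose (N+(k+1)) (k+1)) ≤
        (Nat.choose l k * Nat.choose (l+k) k : ℝ) / (Nat.choose (N+k) k)) ∧
    0 ≤ ∑ k ∈ Finset.Icc 1 l,
        (-1:ℝ)^(k+1) * (Nat.choose l k * Nat.choose (l+k) k : ℝ) /
          (Nat.choose (N+k) k) ∧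
    ∑ k ∈ Finset.Icc 1 l,
        (-1:ℝ)^(k+1) * (Nat.choose l k * Nat.choose (l+k) k : ℝ) /
          (Nat.choose (N+k) k) ≤ (l:ℝ)*(l+1)/(N+1) :=
  stmt_11_general l N h
end

section
/- The harmonic ensemble X = {X_1,…,X_N} on the one-dimensional torus with parameter T (so N = 2T+1) satisfies E D_{per,2}²(X) = (1/(π²N²)) ∑_{k=1}^N 1/k + (1/(π²N)) ∑_{k=N+1}^∞ 1/k², and hence E D_{per,2}²(X) = (log N + γ + 1)/(π²N²) + O(1/N³), where γ is Euler's constant. -/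
/-!
The variance identity says `E|∑ₙ e^{2πikXₙ}|² = min(|k|, N)` for `k ≠ 0`. All terms of the
discrepancy series are nonnegative, so expectation and summation commute, and by symmetry in
`k ↦ -k` one gets `E D² = (1/(π²N²)) ∑_{k ≥ 1} min(k, N)/k²`; splitting at `k = N` gives the
harmonic number `H_N` plus `N ∑_{k > N} 1/k²`.

For the asymptotics, `0 ≤ H_N - log N - γ ≤ 1/N`, and comparing `1/k²` with the telescoping
terms `1/(k(k+1))` and `1/((k-1)k)` puts `∑_{k > N} 1/k²` between `1/(N+1)` and `1/N`. Both
errors become `O(1/N³)` after division by `π²N²`.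
-/

open MeasureTheory Real Filter Topology

/-- The exact value `(1/(π²N²))∑_{k=1}^N 1/k + (1/(π²N))∑_{k=N+1}^∞ 1/k²`. -/
noncomputable def S15 (N : ℕ) : ℝ :=
  1/(π^2*N^2) * ∑ k ∈ Finset.Icc 1 N, (1/(k:ℝ)) +
    1/(π^2*N) * ∑' j : ℕ, 1/((N:ℝ)+1+j)^2

lemma hasSum_one_div_mul_add_one {a : ℝ} (ha : 0 < a) :
    HasSum (fun j : ℕ => 1 / ((a + j) * (a + j + 1))) (1 / a) := by
  have htelescope : ∀ j : ℕ,
      1 / ((a + j) * (a + j + 1)) = 1 / (a + j) - 1 / (a + (j + 1 : ℕ)) := by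
    intro j
    push_cast
    field_simp
    ring
  have hlim : Tendsto (fun n : ℕ => 1 / (a + n)) atTop (𝓝 0) :=
    tendsto_const_nhds.div_atTop (tendsto_atTop_add_const_left _ _ tendsto_natCast_atTop_atTop)
  rw [hasSum_iff_tendsto_nat_of_nonneg (fun j => by positivity)]
  simp_rw [htelescope, Finset.sum_range_sub']
  simpa using tendsto_const_nhds.sub hlim

lemma summable_one_div_add_sq {a : ℝ} (ha : 0 < a) :
    Summable fun j : ℕ => 1 / (a + j) ^ 2 := by
  refine ((Real.summable_one_div_nat_add_rpow a 2).mpr one_lt_two).congr fun j => ?_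
  rw [add_comm, abs_of_pos (by positivity), Real.rpow_two]

lemma one_div_le_tsum_one_div_add_sq {a : ℝ} (ha : 0 < a) :
    1 / a ≤ ∑' j : ℕ, 1 / (a + j) ^ 2 := by
  refine hasSum_le (fun j => ?_) (hasSum_one_div_mul_add_one ha)
    (summable_one_div_add_sq ha).hasSum
  exact one_div_le_one_div_of_le (by positivity) (by nlinarith)

lemma tsum_one_div_add_sq_le {a : ℝ} (ha : 1 < a) :
    ∑' j : ℕ, 1 / (a + j) ^ 2 ≤ 1 / (a - 1) := by
  refine hasSum_le (fun j => ?_) (summable_one_div_add_sq (by linarith)).hasSum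
    (hasSum_one_div_mul_add_one (sub_pos.mpr ha))
  have : 0 < a - 1 + j := by positivity
  exact one_div_le_one_div_of_le (by positivity) (by nlinarith)

lemma harmonic_sub_log_sub_eulerMascheroniConstant_mem_Icc {n : ℕ} (hn : n ≠ 0) :
    (harmonic n : ℝ) - log n - eulerMascheroniConstant ∈ Set.Icc (0 : ℝ) (1 / n) := by
  have hlower := eulerMascheroniConstant_lt_eulerMascheroniSeq' n
  have hupper := eulerMascheroniSeq_lt_eulerMascheroniConstant n
  rw [eulerMascheroniSeq', if_neg hn] at hlower
  rw [eulerMascheroniSeq] at hupper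
  have hpos : (0 : ℝ) < n := by positivity
  have hlog : log (n + 1) - log n ≤ 1 / n := by
    rw [← log_div (by positivity) hpos.ne']
    have := log_le_sub_one_of_pos (show 0 < ((n : ℝ) + 1) / n by positivity)
    have : ((n : ℝ) + 1) / n - 1 = 1 / n := by field_simp; ring
    linarith
  constructor <;> linarith

lemma integral_tsum_of_nonneg {α ι : Type*} [MeasurableSpace α] {μ : Measure α} [Countable ι]
    {F : ι → α → ℝ} (hF : ∀ i a, 0 ≤ F i a) (hint : ∀ i, Integrable (F i) μ)
    (hsum : Summable fun i => ∫ a, F i a ∂μ) :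
    ∫ a, ∑' i, F i a ∂μ = ∑' i, ∫ a, F i a ∂μ :=
  (integral_tsum_of_summable_integral_norm hint <| by
    simpa only [Real.norm_of_nonneg (hF _ _)] using hsum).symm

lemma tsum_ne_zero_int_eq_two_mul_tsum_succ {f : ℤ → ℝ} (hf : f.Even) (hs : Summable f) :
    ∑' k : {k : ℤ // k ≠ 0}, f k = 2 * ∑' n : ℕ, f (n + 1) := by
  have heven : ({0}ᶜ : Set ℤ).indicator f |>.Even := fun k => by
    by_cases hk : k = 0 <;> simp [Set.indicator, hk, hf k]
  have hpnat : ∀ n : ℕ+, ({0}ᶜ : Set ℤ).indicator f n = f (n : ℕ) := fun n =>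
    Set.indicator_of_mem (by simp) f
  rw [show ∑' k : {k : ℤ // k ≠ 0}, f k = ∑' k : ({0}ᶜ : Set ℤ), f k from rfl, tsum_subtype,
    tsum_int_eq_zero_add_two_mul_tsum_pnat heven (hs.indicator _), tsum_congr hpnat,
    tsum_pnat_eq_tsum_succ (f := fun n : ℕ => f n)]
  simp

lemma tsum_min_div_sq (N : ℕ) :
    ∑' n : ℕ, min ((n : ℝ) + 1) N / ((n : ℝ) + 1) ^ 2
      = (harmonic N : ℝ) + N * ∑' j : ℕ, 1 / ((N : ℝ) + 1 + j) ^ 2 := by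
  have hs : Summable fun n : ℕ => min ((n : ℝ) + 1) N / ((n : ℝ) + 1) ^ 2 := by
    have hsq : Summable fun n : ℕ => 1 / ((n + 1 : ℕ) : ℝ) ^ 2 :=
      (summable_nat_add_iff 1).mpr (Real.summable_one_div_nat_pow.mpr one_lt_two)
    refine .of_nonneg_of_le (fun n => by positivity) (fun n => ?_) (hsq.mul_left (N : ℝ))
    push_cast
    rw [mul_one_div]
    gcongr
    exact min_le_right _ _
  rw [← hs.sum_add_tsum_nat_add N, harmonic, ← tsum_mul_left]
  push_cast
  congr 1
  · refine Finset.sum_congr rfl fun n hn => ?_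
    have : (n : ℝ) + 1 ≤ N := by exact_mod_cast Finset.mem_range.mp hn
    rw [min_eq_left this]
    field_simp
  · refine tsum_congr fun n => ?_
    rw [min_eq_right (by linarith [n.cast_nonneg (α := ℝ)])]
    ring

lemma S15_eq_harmonic (N : ℕ) :
    S15 N =
      ((harmonic N : ℝ) + N * ∑' j : ℕ, 1 / ((N : ℝ) + 1 + j) ^ 2) / (π ^ 2 * N ^ 2) := by
  rcases eq_or_ne N 0 with rfl | hN
  · simp [S15]
  rw [S15, harmonic_eq_sum_Icc]
  push_cast
  simp_rw [one_div]
  field_simp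

noncomputable def expSum {Ω : Type*} {N : ℕ} (X : Fin N → Ω → ℝ) (k : ℤ) (ω : Ω) : ℂ :=
  ∑ n, Complex.exp (2 * π * Complex.I * k * X n ω)

lemma integral_discrepancy_eq_S15 {Ω : Type*} [MeasureSpace Ω] {N : ℕ} (hN : N ≠ 0)
    (X : Fin N → Ω → ℝ)
    (hvar : ∀ k : ℤ, k ≠ 0 → ∫ ω, ‖expSum X k ω‖ ^ 2 = min |(k : ℝ)| N) :
    ∫ ω, (1 / 3 : ℝ) * ∑' k : {k : ℤ // k ≠ 0},
        3 / (2 * π ^ 2 * ((k : ℤ) : ℝ) ^ 2) * ‖(1 / N : ℂ) * expSum X k ω‖ ^ 2 = S15 N := by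
  set w : ℤ → ℝ := fun k => min |(k : ℝ)| N / (k : ℝ) ^ 2 with hw
  have hterm (k : ℤ) (ω : Ω) :
      3 / (2 * π ^ 2 * (k : ℝ) ^ 2) * ‖(1 / N : ℂ) * expSum X k ω‖ ^ 2
        = 3 / (2 * π ^ 2 * N ^ 2) * (‖expSum X k ω‖ ^ 2 / (k : ℝ) ^ 2) := by
    rw [norm_mul, norm_div, norm_one, Complex.norm_natCast]
    ring
  have hintegral (k : {k : ℤ // k ≠ 0}) :
      ∫ ω, 3 / (2 * π ^ 2 * ((k : ℤ) : ℝ) ^ 2) * ‖(1 / N : ℂ) * expSum X k ω‖ ^ 2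
        = 3 / (2 * π ^ 2 * N ^ 2) * w k := by
    simp_rw [hterm, integral_const_mul, integral_div, hvar k k.2]
    rfl
  have hintegrable (k : {k : ℤ // k ≠ 0}) : Integrable (fun ω =>
      3 / (2 * π ^ 2 * ((k : ℤ) : ℝ) ^ 2) * ‖(1 / N : ℂ) * expSum X k ω‖ ^ 2) :=
    .of_integral_ne_zero <| by
      have hk : ((k : ℤ) : ℝ) ≠ 0 := by exact_mod_cast k.2
      rw [hintegral]
      positivity
  have hw_summable : Summable w := by
    refine .of_nonneg_of_le (fun k => by positivity) (fun k => ?_)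
      ((Real.summable_one_div_int_pow.mpr one_lt_two).mul_left (N : ℝ))
    rw [mul_one_div]
    exact div_le_div_of_nonneg_right (min_le_right _ _) (sq_nonneg _)
  have hw_even : w.Even := fun k => by simp [hw]
  have hw_succ (n : ℕ) : w (n + 1) = min ((n : ℝ) + 1) N / ((n : ℝ) + 1) ^ 2 := by
    simp only [hw]
    push_cast
    rw [abs_of_pos (by positivity)]
  rw [integral_const_mul, integral_tsum_of_nonneg (fun _ _ => by positivity) hintegrable
    (by simp only [hintegral]; exact (hw_summable.subtype _).mul_left _), tsum_congr hintegral,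
    tsum_mul_left, tsum_ne_zero_int_eq_two_mul_tsum_succ hw_even hw_summable,
    tsum_congr hw_succ, tsum_min_div_sq, S15_eq_harmonic]
  field_simp

lemma abs_S15_sub_le {N : ℕ} (hN : N ≠ 0) :
    |S15 N - (log N + eulerMascheroniConstant + 1) / (π ^ 2 * N ^ 2)| ≤ 1 / (N : ℝ) ^ 3 := by
  have hN1 : (1 : ℝ) ≤ N := by exact_mod_cast Nat.one_le_iff_ne_zero.mpr hN
  obtain ⟨hx0, hx1⟩ := harmonic_sub_log_sub_eulerMascheroniConstant_mem_Icc hN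
  set x := (harmonic N : ℝ) - log N - eulerMascheroniConstant
  set y := ∑' j : ℕ, 1 / ((N : ℝ) + 1 + j) ^ 2
  have hy0 : 1 / ((N : ℝ) + 1) ≤ y := one_div_le_tsum_one_div_add_sq (by positivity)
  have hy1 : y ≤ 1 / N := by
    have := tsum_one_div_add_sq_le (a := (N : ℝ) + 1) (by linarith)
    rwa [add_sub_cancel_right] at this
  have hxN : x * N ≤ 1 := by rwa [le_div_iff₀ (by positivity)] at hx1
  have hyN : N ≤ y * N ^ 2 + 1 := by
    rw [div_le_iff₀ (by positivity)] at hy0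
    nlinarith
  have hyN' : y * N ^ 2 ≤ N := by
    rw [le_div_iff₀ (by positivity)] at hy1
    nlinarith
  have hnum : |x * N + y * N ^ 2 - N| ≤ 1 := abs_le.mpr ⟨by nlinarith, by linarith⟩
  have hπ : 1 ≤ π ^ 2 := by nlinarith [pi_gt_three]
  have hdiff : S15 N - (log N + eulerMascheroniConstant + 1) / (π ^ 2 * N ^ 2)
      = (x * N + y * N ^ 2 - N) / (π ^ 2 * N ^ 3) := by
    rw [S15_eq_harmonic]
    field_simp
    ring
  calc |S15 N - (log N + eulerMascheroniConstant + 1) / (π ^ 2 * N ^ 2)|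
      = |x * N + y * N ^ 2 - N| / (π ^ 2 * N ^ 3) := by
        rw [hdiff, abs_div, abs_of_pos (by positivity : (0 : ℝ) < π ^ 2 * N ^ 3)]
    _ ≤ 1 / (1 * N ^ 3) := by gcongr
    _ = 1 / N ^ 3 := by rw [one_mul]

/-- The harmonic ensemble on `𝕋` with parameter `T` (so `N = 2T+1`; the
determinantal structure enters through the variance identity
`E|∑_n e^{2πikX_n}|² = N − max{N−|k|,0}` for `k ≠ 0`) satisfies
`E D_{per,2}²(X) = (1/(π²N²))∑_{k=1}^N 1/k + (1/(π²N))∑_{k>N} 1/k²`, and hence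
`E D_{per,2}²(X) = (log N + γ + 1)/(π²N²) + O(1/N³)`. -/
theorem stmt_15 :
    (∀ (T N : ℕ), N = 2*T+1 →
      ∀ (Ω : Type) (_ : MeasureSpace Ω),
        IsProbabilityMeasure (volume : Measure Ω) →
      ∀ X : Fin N → Ω → ℝ,
      (∀ k : ℤ, k ≠ 0 →
        ∫ ω, ‖∑ n, Complex.exp (2*π*Complex.I*(k:ℂ)*(X n ω : ℂ))‖^2 =
          (N:ℝ) - max ((N:ℝ) - |(k:ℝ)|) 0) →
      ∫ ω, (1/3 : ℝ) * ∑' k : {k : ℤ // k ≠ 0},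
          (3/(2*π^2*((k:ℤ):ℝ)^2)) *
            ‖(1/N : ℂ) * ∑ n, Complex.exp (2*π*Complex.I*((k:ℤ):ℂ)*(X n ω : ℂ))‖^2
        = S15 N) ∧
    (∃ C > 0, ∀ N : ℕ, 1 ≤ N →
      abs (S15 N - (Real.log N + Real.eulerMascheroniConstant + 1)/(π^2*(N:ℝ)^2)) ≤
        C / (N:ℝ)^3) := by
  refine ⟨fun T N hNT Ω _ _ X hvar => integral_discrepancy_eq_S15 (by omega) X fun k hk => ?_,
    1, one_pos, fun N hN => abs_S15_sub_le (by omega)⟩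
  simp only [expSum]
  rw [hvar k hk, ← min_sub_sub_left, sub_sub_cancel, sub_zero]
end
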